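/- Let q ≤ p ≤ n, let Γ₁ be distributed according to the uniform distribution on the complex Stiefel manifold V_q(ℂⁿ) (the pushforward of the Haar probability measure on U(n) under taking the first q columns), and let Δ be the top p×q block of Γ₁. Let X be a random n×q complex matrix, almost surely of rank q, whose law is invariant under left multiplication by every g ∈ U(n), and partition X = [Y; Z] with Y the top p×q block and Z the bottom (n−p)×q block. Then the law of Δ equals the law of Y·(Y*Y + Z*Z)^{−1/2}, where (Y*Y + Z*Z)^{−1/2} is the inverse of the positive definite square root of Y*Y + Z*Z (which is almost surely positive definite). -/

import Mathlib

open MeasureTheory Metric Matrix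
open scoped Quaternion RealInnerProductSpace ENNReal ComplexOrder

noncomputable section

instance {m n α : Type*} [MeasurableSpace α] : MeasurableSpace (Matrix m n α) :=
  inferInstanceAs (MeasurableSpace (m → n → α))

instance : MeasurableSpace ℍ[ℝ] := borel _

instance {n : ℕ} : MeasurableSpace (PiLp 2 (fun _ : Fin n => ℍ[ℝ])) :=
  MeasurableSpace.comap WithLp.ofLp (inferInstanceAs (MeasurableSpace (∀ _ : Fin n, ℍ[ℝ])))

/-- The first `q` columns of an `n × n` matrix. -/
def firstColumns (n q : ℕ) (hq : q ≤ n) (Γ : Matrix (Fin n) (Fin n) ℂ) :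
    Matrix (Fin n) (Fin q) ℂ :=
  Matrix.of fun i j => Γ i (Fin.castLE hq j)

/-- The top `p × q` block of an `n × q` matrix. -/
def topRows (n p q : ℕ) (hp : p ≤ n) (X : Matrix (Fin n) (Fin q) ℂ) :
    Matrix (Fin p) (Fin q) ℂ :=
  Matrix.of fun i j => X (Fin.castLE hp i) j

/-- The bottom `(n-p) × q` block of an `n × q` matrix. -/
def botRows (n p q : ℕ) (X : Matrix (Fin n) (Fin q) ℂ) :
    Matrix (Fin (n - p)) (Fin q) ℂ :=
  Matrix.of fun i j => X ⟨p + i.val, by have := i.isLt; omega⟩ j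

/-- The positive semidefinite square root of `Y^*Y + Z^*Z`, for `Y, Z` the top and bottom
blocks of `X`. -/
def gramSqrt (n p q : ℕ) (hp : p ≤ n) (X : Matrix (Fin n) (Fin q) ℂ) :
    Matrix (Fin q) (Fin q) ℂ :=
  let hA := ((Matrix.posSemidef_conjTranspose_mul_self (topRows n p q hp X)).add
    (Matrix.posSemidef_conjTranspose_mul_self (botRows n p q X)))
  (hA.1.eigenvectorUnitary : Matrix (Fin q) (Fin q) ℂ) *
    diagonal ((fun r : ℝ => (r : ℂ)) ∘ Real.sqrt ∘ hA.1.eigenvalues) *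
    (star hA.1.eigenvectorUnitary : Matrix (Fin q) (Fin q) ℂ)

/-! Let `g` be Haar distributed and independent of `X`, and put `F X = Y (Y*Y + Z*Z)^{-1/2}`.
Since the law of `X` is left invariant, `F (g X)` has the law of `F X`. On the other hand, for
`X` of full rank `W = X (X*X)^{-1/2}` has orthonormal columns, so `W` is the first `q` columns of
some unitary `u`, and `F (g X)` is the top block of the first `q` columns of `g u`; as the Haar
measure of the compact group `U(n)` is also right invariant, this has the law of `Δ`. Computing
the law of `F (g X)` by Fubini in both orders gives the claim. -/

open scoped MatrixOrder

instance {m n α : Type*} [Countable m] [Countable n] [TopologicalSpace α] [MeasurableSpace α]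
    [SecondCountableTopology α] [BorelSpace α] : BorelSpace (Matrix m n α) :=
  inferInstanceAs (BorelSpace (m → n → α))

instance {m n α : Type*} [Countable m] [Countable n] [TopologicalSpace α] [PolishSpace α] :
    PolishSpace (Matrix m n α) :=
  inferInstanceAs (PolishSpace (m → n → α))

instance {n 𝕜 : Type*} [Fintype n] [DecidableEq n] [RCLike 𝕜] :
    CompactSpace (Matrix.unitaryGroup n 𝕜) := by
  refine isCompact_iff_compactSpace.mp <| .of_isClosed_subset
    (isCompact_univ_pi fun _ => isCompact_univ_pi fun _ => isCompact_closedBall (0 : 𝕜) 1)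
    isClosed_unitary fun U hU i _ j _ => ?_
  simpa using entry_norm_bound_of_unitary hU i j

theorem MeasureTheory.Measure.map_mul_right_eq_self_of_compactSpace {G : Type*} [Group G]
    [TopologicalSpace G] [IsTopologicalGroup G] [CompactSpace G]
    [MeasurableSpace G] [BorelSpace G] (μ : Measure G) [IsProbabilityMeasure μ]
    [μ.IsMulLeftInvariant] (g : G) : μ.map (· * g) = μ := by
  have : IsProbabilityMeasure (μ.map (· * g)) :=
    isProbabilityMeasure_map (measurable_mul_const g).aemeasurable
  have := isHaarMeasure_of_isCompact_nonempty_interior μ Set.univ isCompact_univ (by simp)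
    (by simp) (by simp)
  have := isHaarMeasure_of_isCompact_nonempty_interior (μ.map (· * g)) Set.univ isCompact_univ
    (by simp) (by simp) (by simp)
  exact isHaarMeasure_eq_of_isProbabilityMeasure _ _

-- Both sides are the law of `F (act g x)` under `η ⊗ μ`, integrating out `g` resp. `x` first.
theorem MeasureTheory.Measure.map_eq_map_of_ae_exists_mul_right {G E β : Type*} [Mul G]
    [MeasurableSpace G] [MeasurableMul G] [MeasurableSpace E] [MeasurableSpace β]
    {η : Measure G} [IsProbabilityMeasure η] {μ : Measure E} [IsProbabilityMeasure μ]
    {act : G → E → E} (hact : Measurable (Function.uncurry act))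
    (hμ : ∀ g, μ.map (act g) = μ) (hη : ∀ u, η.map (· * u) = η)
    {F : E → β} {L : G → β} (hF : Measurable F) (hL : Measurable L)
    (hFL : ∀ᵐ x ∂μ, ∃ u, ∀ g, F (act g x) = L (g * u)) :
    η.map L = μ.map F := by
  ext s hs
  let Λ : G × E → β := fun z => F (act z.1 z.2)
  have hΛ : Measurable Λ := hF.comp hact
  have integrate_right : (η.prod μ) (Λ ⁻¹' s) = μ.map F s := by
    have slice (g : G) : μ (Prod.mk g ⁻¹' (Λ ⁻¹' s)) = μ.map F s := by
      have hact_g : Measurable (act g) := hact.comp measurable_prodMk_left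
      change μ (act g ⁻¹' (F ⁻¹' s)) = _
      rw [← Measure.map_apply hact_g (hF hs), hμ g, Measure.map_apply hF hs]
    simp [Measure.prod_apply (hΛ hs), slice]
  have integrate_left : (η.prod μ) (Λ ⁻¹' s) = η.map L s := by
    have slice : ∀ᵐ x ∂μ, η ((·, x) ⁻¹' (Λ ⁻¹' s)) = η.map L s := by
      filter_upwards [hFL] with x ⟨u, hu⟩
      conv_rhs => rw [← hη u, Measure.map_apply hL hs,
        Measure.map_apply (measurable_mul_const u) (hL hs)]
      simp [Λ, hu, Set.preimage]
    simp [Measure.prod_apply_symm (hΛ hs), lintegral_congr_ae slice]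
  rw [← integrate_left, integrate_right]

theorem Matrix.isUnit_iff_rank_eq_card {K n : Type*} [Field K] [Fintype n] [DecidableEq n]
    {A : Matrix n n K} : IsUnit A ↔ A.rank = Fintype.card n := by
  refine ⟨rank_of_isUnit A, fun h => mulVec_surjective_iff_isUnit.mp ?_⟩
  have : LinearMap.range A.mulVecLin = ⊤ :=
    Submodule.eq_top_of_finrank_eq (h.trans (Module.finrank_fintype_fun_eq_card K).symm)
  exact LinearMap.range_eq_top.mp this

theorem Matrix.rank_eq_card_iff_isUnit_conjTranspose_mul_self {m n R : Type*} [Fintype m]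
    [Fintype n] [DecidableEq n] [Field R] [PartialOrder R] [StarRing R] [StarOrderedRing R]
    {X : Matrix m n R} :
    X.rank = Fintype.card n ↔ IsUnit (Xᴴ * X) := by
  rw [isUnit_iff_rank_eq_card, rank_conjTranspose_mul_self]

instance {n : Type*} [Fintype n] [DecidableEq n] : MeasurableInv (Matrix n n ℂ) where
  measurable_inv := by
    change Measurable fun A : Matrix n n ℂ => A⁻¹
    simp_rw [inv_def, Ring.inverse_eq_inv']
    exact (measurable_inv.comp (continuous_id.matrix_det).measurable).smul
      (continuous_id.matrix_adjugate).measurable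

theorem Measurable.matrix_mul {α l m n : Type*} [MeasurableSpace α] [Fintype l] [Fintype m]
    [Fintype n] {f : α → Matrix l m ℂ} {g : α → Matrix m n ℂ} (hf : Measurable f)
    (hg : Measurable g) : Measurable fun a => f a * g a :=
  (continuous_fst.matrix_mul continuous_snd).measurable.comp (hf.prodMk hg)

theorem Matrix.isClosed_setOf_nonneg {n : Type*} [Fintype n] [DecidableEq n] :
    IsClosed {A : Matrix n n ℂ | 0 ≤ A} := by
  open scoped Matrix.Norms.L2Operator in exact CStarAlgebra.isClosed_nonneg

-- `CFC.sqrt` inverts the squaring map, which is a measurable injection on the closed set of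
-- nonnegative matrices, so measurability follows from Lusin–Souslin.
theorem Matrix.measurable_cfcSqrt {n : Type*} [Fintype n] [DecidableEq n] :
    Measurable (CFC.sqrt : Matrix n n ℂ → Matrix n n ℂ) := by
  let P := {A : Matrix n n ℂ | 0 ≤ A}
  have : StandardBorelSpace P := isClosed_setOf_nonneg.measurableSet.standardBorel
  let sq : P → Matrix n n ℂ := fun B => B * B
  have nonneg (B : P) : 0 ≤ (B : Matrix n n ℂ) := B.2
  have sq_injective : Function.Injective sq := fun B C h =>
    Subtype.ext <| by
      simpa only [sq, CFC.sqrt_mul_self _ (nonneg B), CFC.sqrt_mul_self _ (nonneg C)]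
        using congrArg CFC.sqrt h
  have sq_embedding : MeasurableEmbedding sq :=
    (continuous_subtype_val.matrix_mul continuous_subtype_val).measurable.measurableEmbedding
      sq_injective
  suffices CFC.sqrt = Function.extend sq Subtype.val 0 from
    this ▸ sq_embedding.measurable_extend measurable_subtype_coe measurable_const
  funext A
  by_cases hA : 0 ≤ A
  · have : A = sq ⟨CFC.sqrt A, CFC.sqrt_nonneg A⟩ := (CFC.sqrt_mul_sqrt_self A hA).symm
    rw [this, sq_injective.extend_apply, ← this]
  · refine (CFC.sqrt_of_not_nonneg hA).trans
      (Function.extend_apply' (f := sq) Subtype.val 0 A ?_).symm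
    rintro ⟨B, rfl⟩
    exact hA (by simpa [sq, (nonneg B).isSelfAdjoint.star_eq] using star_mul_self_nonneg B.1)

theorem Matrix.PosSemidef.cfcSqrt_eq {n : Type*} [Fintype n] [DecidableEq n]
    {A : Matrix n n ℂ} (hA : A.PosSemidef) :
    CFC.sqrt A = (hA.1.eigenvectorUnitary : Matrix n n ℂ) *
      diagonal ((fun r : ℝ => (r : ℂ)) ∘ Real.sqrt ∘ hA.1.eigenvalues) *
      (star hA.1.eigenvectorUnitary : Matrix n n ℂ) := by
  rw [CFC.sqrt_eq_cfc, cfc_nnreal_eq_real _ A hA.nonneg, hA.1.cfc_eq]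
  simp only [IsHermitian.cfc, Unitary.conjStarAlgAut_apply]
  congr 3
  funext i
  simp [Real.coe_sqrt, Real.coe_toNNReal', hA.eigenvalues_nonneg i]

theorem Matrix.conjTranspose_mul_self_eq_one_of_mul_inv_cfcSqrt {m n : Type*} [Fintype m]
    [Fintype n] [DecidableEq n] {X : Matrix m n ℂ} (hX : IsUnit (Xᴴ * X)) :
    (X * (CFC.sqrt (Xᴴ * X))⁻¹)ᴴ * (X * (CFC.sqrt (Xᴴ * X))⁻¹) = 1 := by
  set S := CFC.sqrt (Xᴴ * X)
  have hS : IsUnit S.det := (isUnit_iff_isUnit_det S).mp <|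
    (CFC.isUnit_sqrt_iff _ (posSemidef_conjTranspose_mul_self X).nonneg).mpr hX
  have hS_herm : Sᴴ = S := (CFC.sqrt_nonneg _).isSelfAdjoint.star_eq
  calc (X * S⁻¹)ᴴ * (X * S⁻¹) = S⁻¹ * (S * S) * S⁻¹ := by
        rw [CFC.sqrt_mul_sqrt_self _ (posSemidef_conjTranspose_mul_self X).nonneg,
          conjTranspose_mul, conjTranspose_nonsing_inv, hS_herm]
        simp only [Matrix.mul_assoc]
    _ = 1 := by
        rw [← Matrix.mul_assoc, nonsing_inv_mul _ hS, Matrix.one_mul, mul_nonsing_inv _ hS]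

theorem conjTranspose_topRows_mul_add_conjTranspose_botRows_mul (n p q : ℕ) (hp : p ≤ n)
    (X : Matrix (Fin n) (Fin q) ℂ) :
    (topRows n p q hp X)ᴴ * topRows n p q hp X + (botRows n p q X)ᴴ * botRows n p q X
      = Xᴴ * X := by
  let e : Fin p ⊕ Fin (n - p) ≃ Fin n := finSumFinEquiv.trans (finCongr (by omega))
  have split : X.submatrix e id = fromRows (topRows n p q hp X) (botRows n p q X) := by
    ext (i | i) j <;> rfl
  rw [← fromCols_mul_fromRows, ← conjTranspose_fromRows_eq_fromCols_conjTranspose, ← split,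
    conjTranspose_submatrix, submatrix_mul_equiv, submatrix_id_id]

theorem gramSqrt_eq_cfcSqrt (n p q : ℕ) (hp : p ≤ n) (X : Matrix (Fin n) (Fin q) ℂ) :
    gramSqrt n p q hp X = CFC.sqrt (Xᴴ * X) := by
  rw [gramSqrt, ← conjTranspose_topRows_mul_add_conjTranspose_botRows_mul n p q hp,
    PosSemidef.cfcSqrt_eq ((posSemidef_conjTranspose_mul_self _).add
      (posSemidef_conjTranspose_mul_self _))]

theorem topRows_mul (n p q : ℕ) (hp : p ≤ n) {r : ℕ} (M : Matrix (Fin n) (Fin r) ℂ)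
    (B : Matrix (Fin r) (Fin q) ℂ) :
    topRows n p q hp (M * B) = topRows n p r hp M * B := rfl

theorem firstColumns_mul (n q : ℕ) (hq : q ≤ n) (g U : Matrix (Fin n) (Fin n) ℂ) :
    firstColumns n q hq (g * U) = g * firstColumns n q hq U := rfl

theorem continuous_topRows (n p q : ℕ) (hp : p ≤ n) : Continuous (topRows n p q hp) :=
  continuous_id.matrix_submatrix _ _

theorem continuous_firstColumns (n q : ℕ) (hq : q ≤ n) : Continuous (firstColumns n q hq) :=
  continuous_id.matrix_submatrix _ _

theorem exists_unitary_firstColumns_eq {n q : ℕ} (hq : q ≤ n) {W : Matrix (Fin n) (Fin q) ℂ}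
    (hW : Wᴴ * W = 1) : ∃ u : unitaryGroup (Fin n) ℂ, firstColumns n q hq u = W := by
  let v : Fin n → EuclideanSpace ℂ (Fin n) := fun j =>
    if h : (j : ℕ) < q then WithLp.toLp 2 (fun i => W i ⟨j, h⟩) else 0
  let s : Set (Fin n) := Set.range (Fin.castLE hq)
  have hv : Orthonormal ℂ (s.domRestrict v) := by
    rw [orthonormal_iff_ite]
    rintro ⟨_, j, rfl⟩ ⟨_, k, rfl⟩
    simpa [v, EuclideanSpace.inner_toLp_toLp, dotProduct, mul_apply, one_apply, mul_comm,
      Subtype.ext_iff, Fin.castLE_inj] using congrFun (congrFun hW j) k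
  obtain ⟨b, hb⟩ := hv.exists_orthonormalBasis_extension_of_card_eq (by simp)
  let e := EuclideanSpace.basisFun (Fin n) ℂ
  refine ⟨⟨e.toBasis.toMatrix b, e.toMatrix_orthonormalBasis_mem_unitary b⟩, ?_⟩
  ext i j
  have := hb _ ⟨j, rfl⟩
  simp [firstColumns, Module.Basis.toMatrix_apply, this, v, e]

theorem Matrix.measurableSet_setOf_rank_eq_card {m n : Type*} [Fintype m] [Fintype n]
    [DecidableEq n] :
    MeasurableSet {X : Matrix m n ℂ | X.rank = Fintype.card n} := by
  simp_rw [rank_eq_card_iff_isUnit_conjTranspose_mul_self, isUnit_iff_isUnit_det,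
    isUnit_iff_ne_zero]
  exact (continuous_id.matrix_conjTranspose.matrix_mul continuous_id).matrix_det.measurable
    (measurableSet_singleton 0).compl

theorem Matrix.conjTranspose_mul_self_unitary_mul {m n α : Type*} [Fintype m] [DecidableEq m]
    [CommRing α] [StarRing α] (g : unitaryGroup m α) (X : Matrix m n α) :
    ((g : Matrix m m α) * X)ᴴ * ((g : Matrix m m α) * X) = Xᴴ * X := by
  rw [conjTranspose_mul, Matrix.mul_assoc, ← Matrix.mul_assoc (g : Matrix m m α)ᴴ,
    ← star_eq_conjTranspose, Unitary.star_mul_self_of_mem g.2, Matrix.one_mul]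

/-- **Proposition.**  Let `q ≤ p ≤ n`, let `Γ₁` be uniform on the complex Stiefel manifold
`V_q(ℂⁿ)` (the first `q` columns of a Haar-distributed, i.e. left-invariant-probability-law,
unitary matrix) and let `Δ` be its top `p×q` block.  Let `X` be a random `n×q` complex matrix,
almost surely of rank `q`, whose law is invariant under left multiplication by every
`g ∈ U(n)`, partitioned into a top block `Y` and bottom block `Z`.  Then the law of `Δ`
equals the law of `Y·(Y*Y + Z*Z)^{-1/2}`, the inverse of the positive (semi)definite square
root of `Y*Y + Z*Z` (which is almost surely positive definite) being used. -/
theorem law_top_block_of_stiefel (n p q : ℕ) (hq : q ≤ p) (hp : p ≤ n)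
    (η : Measure (Matrix.unitaryGroup (Fin n) ℂ)) (hη : IsProbabilityMeasure η)
    (hηinv : ∀ g : Matrix.unitaryGroup (Fin n) ℂ, η.map (fun x => g * x) = η)
    (μX : Measure (Matrix (Fin n) (Fin q) ℂ)) (hμX : IsProbabilityMeasure μX)
    (hrank : μX {A : Matrix (Fin n) (Fin q) ℂ | A.rank = q} = 1)
    (hinv : ∀ g : Matrix.unitaryGroup (Fin n) ℂ,
      μX.map (fun A => (g : Matrix (Fin n) (Fin n) ℂ) * A) = μX) :
    η.map (fun Γ : Matrix.unitaryGroup (Fin n) ℂ =>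
        topRows n p q hp (firstColumns n q (hq.trans hp) (Γ : Matrix (Fin n) (Fin n) ℂ)))
      = μX.map (fun X => topRows n p q hp X * (gramSqrt n p q hp X)⁻¹) := by
  have : η.IsMulLeftInvariant := ⟨hηinv⟩
  have full_rank : ∀ᵐ X ∂μX, X.rank = q :=
    (mem_ae_iff_prob_eq_one <| by
      simpa using measurableSet_setOf_rank_eq_card (m := Fin n) (n := Fin q)).mpr hrank
  simp_rw [gramSqrt_eq_cfcSqrt]
  refine Measure.map_eq_map_of_ae_exists_mul_right
    (act := fun (g : unitaryGroup (Fin n) ℂ) X => (g : Matrix (Fin n) (Fin n) ℂ) * X)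
    (Continuous.measurable <| by
      exact (continuous_subtype_val.comp continuous_fst).matrix_mul continuous_snd)
    hinv (Measure.map_mul_right_eq_self_of_compactSpace η) ?_ ?_ ?_
  · exact (continuous_topRows n p q hp).measurable.matrix_mul <| measurable_inv.comp <|
      measurable_cfcSqrt.comp
        (continuous_id.matrix_conjTranspose.matrix_mul continuous_id).measurable
  · exact ((continuous_topRows n p q hp).comp
      ((continuous_firstColumns n q _).comp continuous_subtype_val)).measurable
  filter_upwards [full_rank] with X hX
  obtain ⟨u, hu⟩ := exists_unitary_firstColumns_eq (hq.trans hp)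
    (conjTranspose_mul_self_eq_one_of_mul_inv_cfcSqrt
      (rank_eq_card_iff_isUnit_conjTranspose_mul_self.mp (by simpa using hX)))
  refine ⟨u, fun g => ?_⟩
  rw [Submonoid.coe_mul, firstColumns_mul, hu, conjTranspose_mul_self_unitary_mul,
    ← topRows_mul, Matrix.mul_assoc]

end
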